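/- (Correctness of converting (N, K_1, T_1) left-shares to (N, K_2, T_2) right-shares.) Let F be a field, let N be a positive integer with N·1_F ≠ 0 in F, and let α ∈ F be a primitive N-th root of unity. Let K_1, T_1 be positive integers with K_1 + T_1 ≤ N, let A_1, …, A_{K_1} and R_1, …, R_{T_1} be m×n' matrices over F, and let L_i = ∑_{l=1}^{K_1} A_l α^{(i−1)(l−1)} + ∑_{l=1}^{T_1} R_l α^{(i−1)(K_1+l−1)} for i ∈ {1, …, N}. Let K_2, T_2 be positive integers, suppose K_2 divides m, partition each m×n' matrix row-wise into K_2 equal blocks, and for each server i let S^{(i)}_1, …, S^{(i)}_{T_2} be arbitrary (m/K_2)×n' key matrices. Define cross_{i,j} = ∑_{l'=1}^{K_2} L_i^{(l')} α^{−(j−1)(l'−1)} + ∑_{l'=1}^{T_2} S^{(i)}_{l'} α^{−(j−1)(K_2+T_2+l'−1)}. Then for every l ∈ {1, …, K_1} and every j ∈ {1, …, N}, (1/N) ∑_{i=1}^{N} cross_{i,j} · α^{−(i−1)(l−1)} = ∑_{l'=1}^{K_2} A_l^{(l')} α^{−(j−1)(l'−1)} + ∑_{l'=1}^{T_2} S̄_{l,l'}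 α^{−(j−1)(K_2+T_2+l'−1)}, where S̄_{l,l'} = (1/N) ∑_{i=1}^{N} S^{(i)}_{l'} α^{−(i−1)(l−1)}. That is, server j's inverse-DFT of the received cross-shares yields valid (N, K_2, T_2) right-shares of each partition A_l. -/
import Mathlib


lemma orth_sum {F : Type*} [Field F] (N : ℕ) (α : F) (hα : IsPrimitiveRoot α N) (d : ℤ) :
    ∑ i ∈ Finset.range N, (α ^ d) ^ i = if (N:ℤ) ∣ d then (N:F) else 0 := by
  by_cases h : (N:ℤ) ∣ d
  · have h1 : α ^ d = 1 := by rwa [hα.zpow_eq_one_iff_dvd]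
    simp [h1, h]
  · rw [if_neg h]
    have h1 : α ^ d ≠ 1 := by rw [Ne, hα.zpow_eq_one_iff_dvd]; exact h
    have h2 : (α ^ d) ^ N = 1 := by
      rw [← zpow_natCast, ← zpow_mul, mul_comm, zpow_mul, zpow_natCast, hα.pow_eq_one, one_zpow]
    rw [geom_sum_eq h1 N, h2, sub_self, zero_div]

lemma sum_smul_swap {F V : Type*} [Field F] [AddCommGroup V] [Module F V]
    {ι κ : Type*} (s : Finset ι) (t : Finset κ) (c : ι → F) (d : κ → F) (X : ι → κ → V) :
    ∑ i ∈ s, c i • ∑ k ∈ t, d k • X i k = ∑ k ∈ t, d k • ∑ i ∈ s, c i • X i k := by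
  simp only [Finset.smul_sum, smul_smul]
  rw [Finset.sum_comm]
  exact Finset.sum_congr rfl fun _ _ => Finset.sum_congr rfl fun _ _ => by rw [mul_comm]

lemma sum_smul_swap' {F V : Type*} [Field F] [AddCommGroup V] [Module F V]
    {ι κ : Type*} (s : Finset ι) (t : Finset κ) (c : ι → F) (d : ι → κ → F) (X : κ → V) :
    ∑ i ∈ s, c i • ∑ k ∈ t, d i k • X k = ∑ k ∈ t, ∑ i ∈ s, (c i * d i k) • X k := by
  simp only [Finset.smul_sum, smul_smul]
  rw [Finset.sum_comm]

lemma module_calc {F V : Type*} [Field F] [AddCommGroup V] [Module F V]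
    (N : ℕ) (hN : 0 < N) (hNF : (N : F) ≠ 0) (α : F) (hα : IsPrimitiveRoot α N)
    (K1 T1 : ℕ) (hK1T1 : K1 + T1 ≤ N)
    (a : Fin K1 → V) (r : Fin T1 → V) (s : ℕ → V) (l : Fin K1) :
    (N:F)⁻¹ • ∑ i ∈ Finset.range N, α ^ (-(i:ℤ) * (l.1:ℤ)) •
        ((∑ l'' : Fin K1, α ^ (i * l''.1) • a l''
          + ∑ t : Fin T1, α ^ (i * (K1 + t.1)) • r t) + s i)
      = a l + (N:F)⁻¹ • ∑ i ∈ Finset.range N, α ^ (-(i:ℤ) * (l.1:ℤ)) • s i := by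
  have hα0 : α ≠ 0 := hα.ne_zero hN.ne'
  have hcoef : ∀ (i e : ℕ), α ^ (-(i:ℤ)*(l.1:ℤ)) * α ^ (i*e) = (α ^ ((e:ℤ) - l.1)) ^ i := by
    intro i e
    rw [← zpow_natCast α (i*e), ← zpow_add₀ hα0, ← zpow_natCast (α ^ ((e:ℤ) - l.1)), ← zpow_mul]
    congr 1; push_cast; ring
  have hA : ∑ i ∈ Finset.range N, α ^ (-(i:ℤ)*(l.1:ℤ)) • ∑ l'' : Fin K1, α ^ (i*l''.1) • a l''
      = (N:F) • a l := by
    rw [sum_smul_swap']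
    have h1 : ∀ l'' : Fin K1,
        (∑ i ∈ Finset.range N, (α ^ (-(i:ℤ)*(l.1:ℤ)) * α ^ (i*l''.1)) • a l'')
        = (if l'' = l then (N:F) else 0) • a l'' := by
      intro l''
      simp only [hcoef, ← Finset.sum_smul, orth_sum N α hα]
      congr 1
      rcases eq_or_ne l'' l with rfl | hne
      · simp
      · rw [if_neg, if_neg hne]
        intro hdvd
        have hb : |(l''.1:ℤ) - l.1| < N := by
          have := l''.2; have := l.2
          rw [abs_lt]; omega
        have := Int.eq_zero_of_abs_lt_dvd hdvd hb
        exact hne (Fin.ext (by omega))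
    simp only [h1, ite_smul, zero_smul, Finset.sum_ite_eq', Finset.mem_univ, if_pos]
  have hR : ∑ i ∈ Finset.range N, α ^ (-(i:ℤ)*(l.1:ℤ)) • ∑ t : Fin T1, α ^ (i*(K1+t.1)) • r t
      = 0 := by
    rw [sum_smul_swap']
    refine Finset.sum_eq_zero fun t _ => ?_
    simp only [hcoef, ← Finset.sum_smul, orth_sum N α hα]
    rw [if_neg, zero_smul]
    intro hdvd
    have hb : |((K1 + t.1 : ℕ):ℤ) - l.1| < N := by
      have := t.2; have := l.2
      rw [abs_lt]; constructor <;> push_cast <;> omega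
    have h0 := Int.eq_zero_of_abs_lt_dvd hdvd hb
    have := l.2; have := t.2
    push_cast at h0; omega
  simp only [smul_add, Finset.sum_add_distrib, hA, hR, add_zero]
  rw [smul_smul, inv_mul_cancel₀ hNF, one_smul]

/-- The `l`-th block of the row-wise partition of a `(K·b) × n` matrix into `K`
equal blocks of size `b × n`. -/
def rowBlock {F : Type*} {b n : ℕ} (K : ℕ) (M : Matrix (Fin (K * b)) (Fin n) F)
    (l : Fin K) : Matrix (Fin b) (Fin n) F :=
  Matrix.of fun r c => M ⟨l.1 * b + r.1, by
    calc l.1 * b + r.1 < l.1 * b + b := Nat.add_lt_add_left r.isLt _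
      _ = (l.1 + 1) * b := by ring
      _ ≤ K * b := Nat.mul_le_mul_right _ l.isLt⟩ c

/-- Correctness of converting `(N, K_1, T_1)` left-shares into `(N, K_2, T_2)`
right-shares (Section VI-B of the paper): server `j`'s inverse DFT of the received
cross-shares yields, for each partition `A_l`, a valid `(N, K_2, T_2)` right-share of
`A_l` with key matrices `S̄_{l,l'} = (1/N) ∑_i S^{(i)}_{l'} α^{-(i-1)(l-1)}`.
Servers and blocks are 0-indexed here; the matrices have `m = K_2·b` rows. -/
theorem left_to_right_share_conversion {F : Type*} [Field F] {b n' : ℕ}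
    (N : ℕ) (hN : 0 < N) (hNF : (N : F) ≠ 0) (α : F) (hα : IsPrimitiveRoot α N)
    (K1 T1 : ℕ) (hK1 : 0 < K1) (hT1 : 0 < T1) (hK1T1 : K1 + T1 ≤ N)
    (K2 T2 : ℕ) (hK2 : 0 < K2) (hT2 : 0 < T2)
    (A : Fin K1 → Matrix (Fin (K2 * b)) (Fin n') F)
    (R : Fin T1 → Matrix (Fin (K2 * b)) (Fin n') F)
    (L : ℕ → Matrix (Fin (K2 * b)) (Fin n') F)
    (hL : ∀ i, L i = ∑ l : Fin K1, α ^ (i * l.1) • A l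
        + ∑ l : Fin T1, α ^ (i * (K1 + l.1)) • R l)
    (S : ℕ → Fin T2 → Matrix (Fin b) (Fin n') F)
    (cross : ℕ → ℕ → Matrix (Fin b) (Fin n') F)
    (hcross : ∀ i j, cross i j
        = ∑ l' : Fin K2, α ^ (-(j : ℤ) * (l'.1 : ℤ)) • rowBlock K2 (L i) l'
          + ∑ l' : Fin T2, α ^ (-(j : ℤ) * ((K2 + T2 + l'.1 : ℕ) : ℤ)) • S i l') :
    ∀ (l : Fin K1) (j : ℕ),
      (N : F)⁻¹ • ∑ i ∈ Finset.range N, α ^ (-(i : ℤ) * (l.1 : ℤ)) • cross i j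
        = ∑ l' : Fin K2, α ^ (-(j : ℤ) * (l'.1 : ℤ)) • rowBlock K2 (A l) l'
          + ∑ l' : Fin T2, α ^ (-(j : ℤ) * ((K2 + T2 + l'.1 : ℕ) : ℤ)) •
              ((N : F)⁻¹ • ∑ i ∈ Finset.range N, α ^ (-(i : ℤ) * (l.1 : ℤ)) • S i l') := by
  intro l j
  set a : Fin K1 → Matrix (Fin b) (Fin n') F :=
    fun l'' => ∑ l' : Fin K2, α ^ (-(j : ℤ) * (l'.1 : ℤ)) • rowBlock K2 (A l'') l' with ha
  set r : Fin T1 → Matrix (Fin b) (Fin n') F :=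
    fun t => ∑ l' : Fin K2, α ^ (-(j : ℤ) * (l'.1 : ℤ)) • rowBlock K2 (R t) l' with hr
  set s : ℕ → Matrix (Fin b) (Fin n') F :=
    fun i => ∑ l' : Fin T2, α ^ (-(j : ℤ) * ((K2 + T2 + l'.1 : ℕ) : ℤ)) • S i l' with hs
  have hRB : ∀ (i : ℕ) (l' : Fin K2),
      rowBlock K2 ((∑ l'' : Fin K1, α ^ (i * l''.1) • A l'')
        + ∑ t : Fin T1, α ^ (i * (K1 + t.1)) • R t) l'
      = ∑ l'' : Fin K1, α ^ (i * l''.1) • rowBlock K2 (A l'') l'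
        + ∑ t : Fin T1, α ^ (i * (K1 + t.1)) • rowBlock K2 (R t) l' := by
    intro i l'
    ext rr cc
    simp [rowBlock, Matrix.sum_apply]
  have hc : ∀ i, cross i j
      = (∑ l'' : Fin K1, α ^ (i * l''.1) • a l''
          + ∑ t : Fin T1, α ^ (i * (K1 + t.1)) • r t) + s i := by
    intro i
    rw [hcross, hL]
    congr 1
    simp only [hRB, smul_add, Finset.sum_add_distrib]
    congr 1
    · exact sum_smul_swap Finset.univ Finset.univ
        (fun l' : Fin K2 => α ^ (-(j : ℤ) * (l'.1 : ℤ)))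
        (fun l'' : Fin K1 => α ^ (i * l''.1))
        (fun l' l'' => rowBlock K2 (A l'') l')
    · exact sum_smul_swap Finset.univ Finset.univ
        (fun l' : Fin K2 => α ^ (-(j : ℤ) * (l'.1 : ℤ)))
        (fun t : Fin T1 => α ^ (i * (K1 + t.1)))
        (fun l' t => rowBlock K2 (R t) l')
  simp only [hc]
  rw [module_calc N hN hNF α hα K1 T1 hK1T1 a r s l]
  congr 1
  have hswap : ∑ i ∈ Finset.range N, α ^ (-(i : ℤ) * (l.1 : ℤ)) • s i
      = ∑ l' : Fin T2, α ^ (-(j : ℤ) * ((K2 + T2 + l'.1 : ℕ) : ℤ)) •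
          ∑ i ∈ Finset.range N, α ^ (-(i : ℤ) * (l.1 : ℤ)) • S i l' :=
    sum_smul_swap (Finset.range N) Finset.univ
      (fun i : ℕ => α ^ (-(i : ℤ) * (l.1 : ℤ)))
      (fun l' : Fin T2 => α ^ (-(j : ℤ) * ((K2 + T2 + l'.1 : ℕ) : ℤ)))
      (fun i l' => S i l')
  rw [hswap, Finset.smul_sum]
  exact Finset.sum_congr rfl fun _ _ => smul_comm _ _ _
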